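/- Let n ≥ 1, c > 0, r > 0, m ≥ 1, and let x¹, …, x^m ∈ ℝⁿ each satisfy |xʲᵢ| = c for every coordinate i (each xʲ is a vertex of the cube [−c,c]ⁿ). Then the Lebesgue volume of the set {ζ ∈ ℝⁿ : ‖ζ‖ ≤ r and ‖xʲ + ζ‖_∞ > c for all j = 1,…,m} is at least (1 − m·2^{−n}) times the volume of the closed ball B(0,r). Equivalently, a single perturbation ζ drawn from the equidistribution on B(0,r) simultaneously moves all m points outside the cube with probability at least 1 − m/2ⁿ. -/

import Mathlib

/-!
If `|xᵢ| = c` for all `i`, then `‖x + ζ‖_∞ ≤ c` forces every `ζᵢ` to have the sign opposite to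
`xᵢ`, so the perturbations that leave `x` inside the cube lie in a single closed orthant. The
`2ⁿ` closed orthants are images of one another under the coordinate reflections, which preserve
the ball and the volume, and they overlap only in coordinate hyperplanes; hence each meets
`B(0,r)` in at most a `2⁻ⁿ` fraction of its volume. A union bound over the `m` points finishes.
-/

open MeasureTheory Set
open scoped ENNReal

variable {ι : Type*} [Fintype ι]

noncomputable def coordReflection (ε : ι → Bool) :
    EuclideanSpace ℝ ι ≃ₗᵢ[ℝ] EuclideanSpace ℝ ι :=
  LinearIsometryEquiv.piLpCongrRight 2 fun i =>
    if ε i then LinearIsometryEquiv.neg ℝ else LinearIsometryEquiv.refl ℝ ℝ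

@[simp]
lemma coordReflection_apply (ε : ι → Bool) (ζ : EuclideanSpace ℝ ι) (i : ι) :
    coordReflection ε ζ i = if ε i then -ζ i else ζ i := by
  by_cases h : ε i <;> simp [coordReflection, h]

def orthant (ε : ι → Bool) : Set (EuclideanSpace ℝ ι) :=
  coordReflection ε ⁻¹' {ζ | ∀ i, 0 ≤ ζ i}

lemma isClosed_orthant (ε : ι → Bool) : IsClosed (orthant ε) := by
  refine IsClosed.preimage (coordReflection ε).continuous ?_
  simp only [ofPred_forall]
  exact isClosed_iInter fun i => isClosed_le continuous_const (PiLp.continuous_apply 2 _ i)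

lemma volume_setOf_coord_eq_zero (i : ι) : volume {ζ : EuclideanSpace ℝ ι | ζ i = 0} = 0 := by
  classical
  let p : EuclideanSpace ℝ ι →ₗ[ℝ] ℝ := (EuclideanSpace.proj i : StrongDual ℝ _)
  refine Measure.addHaar_submodule _ (LinearMap.ker p) fun htop => ?_
  have : EuclideanSpace.single i (1 : ℝ) ∈ LinearMap.ker p := htop ▸ Submodule.mem_top
  simp [p] at this

lemma aedisjoint_orthant {ε ε' : ι → Bool} (h : ε ≠ ε') :
    AEDisjoint volume (orthant ε) (orthant ε') := by
  obtain ⟨i, hi⟩ := Function.ne_iff.mp h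
  refine measure_mono_null (fun ζ hζ => ?_) (volume_setOf_coord_eq_zero i)
  have h₁ := hζ.1 i
  have h₂ := hζ.2 i
  cases hε : ε i <;> cases hε' : ε' i <;> simp_all [orthant] <;> linarith

lemma volume_inter_orthant_eq {s : Set (EuclideanSpace ℝ ι)}
    (hs : ∀ ε, coordReflection ε ⁻¹' s = s) (ε : ι → Bool) :
    volume (s ∩ orthant ε) = volume (s ∩ {ζ | ∀ i, 0 ≤ ζ i}) := by
  rw [orthant, ← hs ε, ← preimage_inter, hs ε]
  exact (coordReflection ε).measurePreserving.measure_preimage_emb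
    (coordReflection ε).toHomeomorph.measurableEmbedding _

lemma volume_inter_orthant_le {s : Set (EuclideanSpace ℝ ι)} (hs_meas : NullMeasurableSet s)
    (hs : ∀ ε, coordReflection ε ⁻¹' s = s) (ε : ι → Bool) :
    volume (s ∩ orthant ε) ≤ (2 ^ Fintype.card ι)⁻¹ * volume s := by
  classical
  have hsum : ∑' ε' : ι → Bool, volume (s ∩ orthant ε') ≤ volume s :=
    (tsum_meas_le_meas_iUnion_of_disjoint₀ volume
      (fun ε' => hs_meas.inter (isClosed_orthant ε').measurableSet.nullMeasurableSet)
      fun _ _ h => (aedisjoint_orthant h).mono inter_subset_right inter_subset_right).trans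
      (measure_mono (iUnion_subset fun _ => inter_subset_left))
  rw [tsum_fintype] at hsum
  simp only [volume_inter_orthant_eq hs, Finset.sum_const, Finset.card_univ,
    Fintype.card_fun, Fintype.card_bool, nsmul_eq_mul] at hsum
  rw [volume_inter_orthant_eq hs, ← ENNReal.div_eq_inv_mul,
    ENNReal.le_div_iff_mul_le (by simp) (by simp), mul_comm]
  exact_mod_cast hsum

lemma volume_closedBall_inter_orthant_le (r : ℝ) (ε : ι → Bool) :
    volume (Metric.closedBall (0 : EuclideanSpace ℝ ι) r ∩ orthant ε) ≤
      (2 ^ Fintype.card ι)⁻¹ * volume (Metric.closedBall (0 : EuclideanSpace ℝ ι) r) :=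
  volume_inter_orthant_le measurableSet_closedBall.nullMeasurableSet
    (fun ε' => by simp [LinearIsometryEquiv.preimage_closedBall]) ε

lemma setOf_abs_add_le_abs_subset_orthant (x : EuclideanSpace ℝ ι) :
    {ζ | ∀ i, |x i + ζ i| ≤ |x i|} ⊆ orthant fun i => decide (0 < x i) := by
  intro ζ hζ i
  have h := hζ i
  by_cases hx : 0 < x i
  · simp only [hx, decide_true, if_true, coordReflection_apply, abs_of_pos hx] at h ⊢
    linarith [le_abs_self (x i + ζ i)]
  · simp only [hx, decide_false, Bool.false_eq_true, if_false, coordReflection_apply,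
      abs_of_nonpos (not_lt.mp hx)] at h ⊢
    linarith [neg_abs_le (x i + ζ i)]

theorem stmt_12_general (n : ℕ) (c r : ℝ)
    (m : ℕ) (x : Fin m → EuclideanSpace ℝ (Fin n))
    (hx : ∀ j i, |x j i| = c) :
    (1 - (m : ℝ≥0∞) * ((2 : ℝ≥0∞) ^ n)⁻¹) *
        volume (Metric.closedBall (0 : EuclideanSpace ℝ (Fin n)) r) ≤
      volume {ζ : EuclideanSpace ℝ (Fin n) | ‖ζ‖ ≤ r ∧ ∀ j, ∃ i, c < |x j i + ζ i|} := by
  set B := Metric.closedBall (0 : EuclideanSpace ℝ (Fin n)) r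
  set S := {ζ : EuclideanSpace ℝ (Fin n) | ‖ζ‖ ≤ r ∧ ∀ j, ∃ i, c < |x j i + ζ i|}
  have hcover : B \ S ⊆ ⋃ j, B ∩ orthant fun i => decide (0 < x j i) := by
    rintro ζ ⟨hζB, hζS⟩
    obtain ⟨j, hj⟩ : ∃ j, ∀ i, |x j i + ζ i| ≤ |x j i| := by
      simpa [S, hx, mem_closedBall_zero_iff.mp hζB] using hζS
    exact mem_iUnion.mpr ⟨j, hζB, setOf_abs_add_le_abs_subset_orthant (x j) hj⟩
  have hbad : volume (B \ S) ≤ m * ((2 ^ n)⁻¹ * volume B) := calc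
    volume (B \ S) ≤ ∑ j, volume (B ∩ orthant fun i => decide (0 < x j i)) :=
      (measure_mono hcover).trans (measure_iUnion_fintype_le _ _)
    _ ≤ ∑ _j : Fin m, (2 ^ n)⁻¹ * volume B := Finset.sum_le_sum fun j _ =>
      (volume_closedBall_inter_orthant_le r _).trans_eq (by rw [Fintype.card_fin])
    _ = m * ((2 ^ n)⁻¹ * volume B) := by simp
  rw [ENNReal.sub_mul fun _ _ => measure_closedBall_lt_top.ne, one_mul, tsub_le_iff_right,
    mul_assoc]
  exact (measure_le_inter_add_sdiff _ B S).trans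
    (add_le_add (measure_mono inter_subset_right) hbad)

/-- if `x¹, …, x^m` are vertices of the cube `[−c,c]ⁿ` and `r > 0`, then
the volume of `{ζ : ‖ζ‖ ≤ r and ‖xʲ + ζ‖_∞ > c for all j}` is at least `(1 − m·2⁻ⁿ)`
times the volume of the closed ball `B(0,r)`: a single equidistributed perturbation on
`B(0,r)` simultaneously moves all `m` points outside the cube with probability at least
`1 − m/2ⁿ`. -/
theorem stmt_12 (n : ℕ) (hn : 1 ≤ n) (c r : ℝ) (hc : 0 < c) (hr : 0 < r)
    (m : ℕ) (hm : 1 ≤ m) (x : Fin m → EuclideanSpace ℝ (Fin n))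
    (hx : ∀ j i, |x j i| = c) :
    (1 - (m : ℝ≥0∞) * ((2 : ℝ≥0∞) ^ n)⁻¹) *
        volume (Metric.closedBall (0 : EuclideanSpace ℝ (Fin n)) r) ≤
      volume {ζ : EuclideanSpace ℝ (Fin n) | ‖ζ‖ ≤ r ∧ ∀ j, ∃ i, c < |x j i + ζ i|} :=
  stmt_12_general n c r m x hx
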